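/- arXiv:1312.6175 — 7 statements merged into one kernel-verified Lean document; each statement's English description precedes it below -/
import Mathlib

section
/- Let q ∈ (0,1), n ∈ ℕ, β ∈ ℝ, and let θ ∈ [0,1) satisfy ∑_{ν=0}^∞ (q^{2νn}/(2ν+1)) cos((2ν+1)θπ − βπ/2) = 0. Then 0 ≤ 1 − |sin(θπ − βπ/2)| ≤ q^{2n}/(3(1−q^{2n})). -/
set_option maxHeartbeats 1000000
open Real

theorem stmt_2 (q : ℝ) (hq : 0 < q) (hq1 : q < 1) (n : ℕ) (hn : 1 ≤ n) (β θ : ℝ)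
    (hθ0 : 0 ≤ θ) (hθ1 : θ < 1)
    (hroot : ∑' ν : ℕ, q ^ (2 * ν * n) / (2 * (ν : ℝ) + 1)
        * Real.cos ((2 * ν + 1) * θ * π - β * π / 2) = 0) :
    0 ≤ 1 - |Real.sin (θ * π - β * π / 2)| ∧
      1 - |Real.sin (θ * π - β * π / 2)| ≤ q ^ (2 * n) / (3 * (1 - q ^ (2 * n))) := by
  set x := θ * π - β * π / 2 with hx
  have hsin1 : |Real.sin x| ≤ 1 := abs_sin_le_one x
  constructor
  · linarith
  set r : ℝ := q ^ (2 * n) with hr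
  have hr0 : 0 < r := pow_pos hq _
  have hr1 : r < 1 := pow_lt_one₀ hq.le hq1 (by omega)
  set f : ℕ → ℝ := fun ν => q ^ (2 * ν * n) / (2 * (ν : ℝ) + 1)
      * Real.cos ((2 * ν + 1) * θ * π - β * π / 2) with hf
  clear_value x r f
  have hpow : ∀ ν : ℕ, q ^ (2 * ν * n) = r ^ ν := by
    intro ν
    rw [hr, ← pow_mul]
    ring_nf
  have hbound : ∀ ν : ℕ, |f ν| ≤ r ^ ν := by
    intro ν
    rw [hf]
    simp only
    rw [abs_mul, abs_div, hpow]
    have h1 : |r ^ ν| = r ^ ν := abs_of_pos (pow_pos hr0 ν)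
    have h2 : (0:ℝ) < 2 * (ν : ℝ) + 1 := by positivity
    have h3 : |2 * (ν : ℝ) + 1| = 2 * (ν : ℝ) + 1 := abs_of_pos h2
    rw [h1, h3]
    have h4 : |Real.cos ((2 * ν + 1) * θ * π - β * π / 2)| ≤ 1 := abs_cos_le_one _
    have h5 : r ^ ν / (2 * (ν : ℝ) + 1) ≤ r ^ ν := by
      rw [div_le_iff₀ h2]
      nlinarith [pow_pos hr0 ν]
    calc r ^ ν / (2 * (ν : ℝ) + 1) * |Real.cos ((2 * ν + 1) * θ * π - β * π / 2)|
        ≤ r ^ ν / (2 * (ν : ℝ) + 1) * 1 := by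
          apply mul_le_mul_of_nonneg_left h4 (by positivity)
      _ ≤ r ^ ν := by rw [mul_one]; exact h5
  have hsummable : Summable f := by
    apply Summable.of_abs
    apply Summable.of_nonneg_of_le (fun ν => abs_nonneg _) hbound
    exact summable_geometric_of_lt_one hr0.le hr1
  have hsplit : f 0 + ∑' ν, f (ν + 1) = 0 := by
    rw [← hroot]
    exact (Summable.tsum_eq_zero_add hsummable).symm
  have hf0 : f 0 = Real.cos x := by
    rw [hf]; simp [hx]
  have hcos : Real.cos x = - ∑' ν, f (ν + 1) := by
    linarith [hsplit, hf0]
  have hsum1 : Summable (fun ν => f (ν + 1)) := by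
    exact (summable_nat_add_iff 1).mpr hsummable
  have hgeom : Summable (fun ν : ℕ => r / 3 * r ^ ν) :=
    (summable_geometric_of_lt_one hr0.le hr1).mul_left _
  have hbound2 : ∀ ν : ℕ, |f (ν + 1)| ≤ r / 3 * r ^ ν := by
    intro ν
    have h1 : |f (ν + 1)| ≤ r ^ (ν + 1) / (2 * ((ν : ℝ) + 1) + 1) := by
      rw [hf]
      simp only
      push_cast
      rw [abs_mul, abs_div, hpow]
      have h2 : (0:ℝ) < 2 * ((ν : ℝ) + 1) + 1 := by positivity
      rw [abs_of_pos (pow_pos hr0 _), abs_of_pos h2]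
      push_cast
      calc r ^ (ν+1) / (2 * ((ν:ℝ) + 1) + 1) * |Real.cos ((2 * ((ν:ℝ)+1) + 1) * θ * π - β * π / 2)|
          ≤ r ^ (ν+1) / (2 * ((ν:ℝ) + 1) + 1) * 1 :=
            mul_le_mul_of_nonneg_left (abs_cos_le_one _) (by positivity)
        _ = r ^ (ν+1) / (2 * ((ν:ℝ) + 1) + 1) := mul_one _
    have h3 : r ^ (ν + 1) / (2 * ((ν : ℝ) + 1) + 1) ≤ r ^ (ν + 1) / 3 := by
      apply div_le_div_of_nonneg_left (pow_pos hr0 _).le (by norm_num)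
      push_cast; linarith [Nat.cast_nonneg (α := ℝ) ν]
    have h4 : r ^ (ν + 1) / 3 = r / 3 * r ^ ν := by ring
    linarith
  have hgeomsum : ∑' ν : ℕ, r / 3 * r ^ ν = r / 3 * (1 - r)⁻¹ := by
    rw [tsum_mul_left, tsum_geometric_of_lt_one hr0.le hr1]
  have habs : |∑' ν, f (ν + 1)| ≤ r / 3 * (1 - r)⁻¹ := by
    rw [abs_le]
    constructor
    · have h1 : ∀ ν : ℕ, -(r / 3 * r ^ ν) ≤ f (ν + 1) := by
        intro ν
        have := hbound2 ν
        have := neg_abs_le (f (ν + 1))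
        linarith
      have h2 : ∑' ν : ℕ, -(r / 3 * r ^ ν) ≤ ∑' ν, f (ν + 1) :=
        Summable.tsum_le_tsum h1 hgeom.neg hsum1
      rw [tsum_neg, hgeomsum] at h2
      exact h2
    · have h1 : ∀ ν : ℕ, f (ν + 1) ≤ r / 3 * r ^ ν := by
        intro ν
        have := hbound2 ν
        have := le_abs_self (f (ν + 1))
        linarith
      have h2 : ∑' ν, f (ν + 1) ≤ ∑' ν : ℕ, r / 3 * r ^ ν :=
        Summable.tsum_le_tsum h1 hsum1 hgeom
      rw [hgeomsum] at h2
      exact h2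
  have hcosb : |Real.cos x| ≤ r / (3 * (1 - r)) := by
    rw [hcos, abs_neg]
    have : r / 3 * (1 - r)⁻¹ = r / (3 * (1 - r)) := by
      field_simp
    linarith [habs]
  -- 1 - |sin x| ≤ |cos x|
  have key : 1 - |Real.sin x| ≤ |Real.cos x| := by
    have h1 : Real.sin x ^ 2 + Real.cos x ^ 2 = 1 := sin_sq_add_cos_sq x
    have h2 : |Real.sin x| ^ 2 = Real.sin x ^ 2 := sq_abs _
    have h3 : |Real.cos x| ^ 2 = Real.cos x ^ 2 := sq_abs _
    have h4 : |Real.cos x| ≤ 1 := abs_cos_le_one x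
    nlinarith [abs_nonneg (Real.sin x), abs_nonneg (Real.cos x)]
  linarith
end

section
/- Let q ∈ (0,1), n ∈ ℕ, β ∈ ℝ, and let θ ∈ [0,1) be a root of ∑_{ν=0}^∞ (q^{2νn}/(2ν+1)) cos((2ν+1)θπ − βπ/2) = 0. Then |∑_{ν=0}^∞ (q^{(2ν+1)n}/(n(2ν+1)²)) sin((2ν+1)θπ − βπ/2)| ≥ (q^n/n)(1 − (4/9)·q^{2n}/(1−q^{2n})). -/
open Real

theorem stmt_3 (q : ℝ) (hq : 0 < q) (hq1 : q < 1) (n : ℕ) (hn : 1 ≤ n) (β θ : ℝ)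
    (hθ0 : 0 ≤ θ) (hθ1 : θ < 1)
    (hroot : ∑' ν : ℕ, q ^ (2 * ν * n) / (2 * (ν : ℝ) + 1)
        * Real.cos ((2 * ν + 1) * θ * π - β * π / 2) = 0) :
    |∑' ν : ℕ, q ^ ((2 * ν + 1) * n) / ((n : ℝ) * (2 * ν + 1) ^ 2)
        * Real.sin ((2 * ν + 1) * θ * π - β * π / 2)|
      ≥ q ^ n / n * (1 - 4 / 9 * (q ^ (2 * n) / (1 - q ^ (2 * n)))) := by
  set A := q ^ (2 * n) with hAdef
  have hA0 : 0 < A := pow_pos hq _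
  have hA1 : A < 1 := pow_lt_one₀ hq.le hq1 (by omega)
  have h1A : (0:ℝ) < 1 - A := by linarith
  set M := A / (1 - A) with hMdef
  have hM0 : 0 ≤ M := div_nonneg hA0.le h1A.le
  have hn0 : (0:ℝ) < n := by exact_mod_cast Nat.pos_of_ne_zero (by omega)
  set f : ℕ → ℝ := fun ν : ℕ => q ^ (2 * ν * n) / (2 * (ν : ℝ) + 1)
        * Real.cos ((2 * ν + 1) * θ * π - β * π / 2) with hfdef
  set g : ℕ → ℝ := fun ν : ℕ => q ^ ((2 * ν + 1) * n) / ((n : ℝ) * (2 * ν + 1) ^ 2)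
        * Real.sin ((2 * ν + 1) * θ * π - β * π / 2) with hgdef
  have hgeo : Summable (fun ν : ℕ => A ^ ν) := summable_geometric_of_lt_one hA0.le hA1
  have hgeo1 : Summable (fun ν : ℕ => A ^ (ν + 1)) := by
    simpa [pow_succ, mul_comm] using hgeo.mul_left A
  have hgeo1sum : ∑' ν : ℕ, A ^ (ν + 1) = M := by
    calc ∑' ν : ℕ, A ^ (ν + 1) = ∑' ν : ℕ, A * A ^ ν := by
          simp [pow_succ, mul_comm]
      _ = A * (1 - A)⁻¹ := by rw [tsum_mul_left, tsum_geometric_of_lt_one hA0.le hA1]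
      _ = M := by rw [hMdef, div_eq_mul_inv]
  -- bounds on f
  have hfb : ∀ ν : ℕ, |f ν| ≤ A ^ ν := by
    intro ν
    have hd : (1:ℝ) ≤ 2 * (ν:ℝ) + 1 := by
      have : (0:ℝ) ≤ (ν:ℝ) := Nat.cast_nonneg ν
      linarith
    have hc := Real.abs_cos_le_one ((2 * (ν:ℝ) + 1) * θ * π - β * π / 2)
    have hpow : q ^ (2 * ν * n) = A ^ ν := by
      rw [hAdef, ← pow_mul]; congr 1; ring
    rw [hfdef]
    simp only
    rw [abs_mul, abs_div, abs_of_nonneg (pow_nonneg hq.le _),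
      abs_of_nonneg (by linarith : (0:ℝ) ≤ 2 * (ν:ℝ) + 1), hpow]
    calc A ^ ν / (2 * (ν:ℝ) + 1) * |Real.cos ((2 * (ν:ℝ) + 1) * θ * π - β * π / 2)|
        ≤ A ^ ν / (2 * (ν:ℝ) + 1) * 1 :=
          mul_le_mul_of_nonneg_left hc (by positivity)
      _ = A ^ ν / (2 * (ν:ℝ) + 1) := mul_one _
      _ ≤ A ^ ν := div_le_self (pow_nonneg hA0.le _) hd
  have hfb3 : ∀ ν : ℕ, |f (ν + 1)| ≤ A ^ (ν + 1) / 3 := by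
    intro ν
    have hd : (3:ℝ) ≤ 2 * ((ν:ℝ) + 1) + 1 := by
      have : (0:ℝ) ≤ (ν:ℝ) := Nat.cast_nonneg ν
      linarith
    have hc := Real.abs_cos_le_one ((2 * ((ν:ℝ) + 1) + 1) * θ * π - β * π / 2)
    have hpow : q ^ (2 * (ν + 1) * n) = A ^ (ν + 1) := by
      rw [hAdef, ← pow_mul]; congr 1; ring
    rw [hfdef]
    simp only [Nat.cast_add, Nat.cast_one]
    rw [abs_mul, abs_div, abs_of_nonneg (pow_nonneg hq.le _),
      abs_of_nonneg (by linarith : (0:ℝ) ≤ 2 * ((ν:ℝ) + 1) + 1), hpow]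
    calc A ^ (ν + 1) / (2 * ((ν:ℝ) + 1) + 1)
          * |Real.cos ((2 * ((ν:ℝ) + 1) + 1) * θ * π - β * π / 2)|
        ≤ A ^ (ν + 1) / (2 * ((ν:ℝ) + 1) + 1) * 1 :=
          mul_le_mul_of_nonneg_left hc (by positivity)
      _ = A ^ (ν + 1) / (2 * ((ν:ℝ) + 1) + 1) := mul_one _
      _ ≤ A ^ (ν + 1) / 3 :=
          div_le_div_of_nonneg_left (pow_nonneg hA0.le _) (by norm_num) hd
  have hfs : Summable f :=
    Summable.of_norm_bounded hgeo (fun ν => by rw [Real.norm_eq_abs]; exact hfb ν)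
  have hfs1 : Summable (fun ν : ℕ => f (ν + 1)) := (summable_nat_add_iff 1).2 hfs
  -- |cos α| ≤ M/3
  have hsplitf : f 0 + ∑' ν : ℕ, f (ν + 1) = 0 := by
    rw [← Summable.tsum_eq_zero_add hfs]; exact hroot
  have hf0 : f 0 = Real.cos (θ * π - β * π / 2) := by
    rw [hfdef]; norm_num
  have hc0 : |Real.cos (θ * π - β * π / 2)| ≤ M / 3 := by
    have h1 : |∑' ν : ℕ, f (ν + 1)| ≤ ∑' ν : ℕ, |f (ν + 1)| := by
      simpa [Real.norm_eq_abs] using norm_tsum_le_tsum_norm (f := fun ν : ℕ => f (ν + 1))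
        (by simpa [Real.norm_eq_abs] using hfs1.abs)
    have h2 : ∑' ν : ℕ, |f (ν + 1)| ≤ ∑' ν : ℕ, A ^ (ν + 1) / 3 :=
      Summable.tsum_le_tsum hfb3 hfs1.abs (hgeo1.div_const 3)
    have h3 : ∑' ν : ℕ, A ^ (ν + 1) / 3 = M / 3 := by
      rw [tsum_div_const, hgeo1sum]
    have h4 : Real.cos (θ * π - β * π / 2) = -(∑' ν : ℕ, f (ν + 1)) := by
      rw [← hf0]; linarith
    rw [h4, abs_neg]
    linarith
  have hs0 : 1 - M / 3 ≤ |Real.sin (θ * π - β * π / 2)| := by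
    rcases le_or_gt (1 - M / 3) 0 with h | h
    · exact h.trans (abs_nonneg _)
    · have hsq : Real.sin (θ * π - β * π / 2) ^ 2
          = 1 - Real.cos (θ * π - β * π / 2) ^ 2 := Real.sin_sq _
      nlinarith [abs_nonneg (Real.sin (θ * π - β * π / 2)),
        sq_abs (Real.sin (θ * π - β * π / 2)),
        sq_abs (Real.cos (θ * π - β * π / 2)),
        abs_nonneg (Real.cos (θ * π - β * π / 2)), hc0, hM0]
  -- bounds on g
  have hgb0 : ∀ ν : ℕ, |g ν| ≤ q ^ n * A ^ ν := by
    intro ν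
    have hd : (1:ℝ) ≤ (n:ℝ) * (2 * (ν:ℝ) + 1) ^ 2 := by
      have h1 : (0:ℝ) ≤ (ν:ℝ) := Nat.cast_nonneg ν
      have h2 : (1:ℝ) ≤ (n:ℝ) := by exact_mod_cast hn
      nlinarith
    have hs := Real.abs_sin_le_one ((2 * (ν:ℝ) + 1) * θ * π - β * π / 2)
    have hpow : q ^ ((2 * ν + 1) * n) = q ^ n * A ^ ν := by
      rw [hAdef, ← pow_mul, ← pow_add]; congr 1; ring
    rw [hgdef]
    simp only
    rw [abs_mul, abs_div, abs_of_nonneg (pow_nonneg hq.le _),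
      abs_of_nonneg (by positivity : (0:ℝ) ≤ (n:ℝ) * (2 * (ν:ℝ) + 1) ^ 2), hpow]
    calc q ^ n * A ^ ν / ((n:ℝ) * (2 * (ν:ℝ) + 1) ^ 2)
          * |Real.sin ((2 * (ν:ℝ) + 1) * θ * π - β * π / 2)|
        ≤ q ^ n * A ^ ν / ((n:ℝ) * (2 * (ν:ℝ) + 1) ^ 2) * 1 :=
          mul_le_mul_of_nonneg_left hs (by positivity)
      _ = q ^ n * A ^ ν / ((n:ℝ) * (2 * (ν:ℝ) + 1) ^ 2) := mul_one _
      _ ≤ q ^ n * A ^ ν := div_le_self (by positivity) hd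
  have hgs : Summable g :=
    Summable.of_norm_bounded (hgeo.mul_left (q ^ n))
      (fun ν => by rw [Real.norm_eq_abs]; exact hgb0 ν)
  have hgs1 : Summable (fun ν : ℕ => g (ν + 1)) := (summable_nat_add_iff 1).2 hgs
  have hgb : ∀ ν : ℕ, |g (ν + 1)| ≤ q ^ n / (n:ℝ) * (A ^ (ν + 1) / 9) := by
    intro ν
    have h1 : (0:ℝ) ≤ (ν:ℝ) := Nat.cast_nonneg ν
    have hd9 : (9:ℝ) ≤ (2 * ((ν:ℝ) + 1) + 1) ^ 2 := by nlinarith [h1]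
    have hd : (n:ℝ) * 9 ≤ (n:ℝ) * (2 * ((ν:ℝ) + 1) + 1) ^ 2 :=
      mul_le_mul_of_nonneg_left hd9 hn0.le
    have hs := Real.abs_sin_le_one ((2 * ((ν:ℝ) + 1) + 1) * θ * π - β * π / 2)
    have hpow : q ^ ((2 * (ν + 1) + 1) * n) = q ^ n * A ^ (ν + 1) := by
      rw [hAdef, ← pow_mul, ← pow_add]; congr 1; ring
    rw [hgdef]
    simp only [Nat.cast_add, Nat.cast_one]
    rw [abs_mul, abs_div, abs_of_nonneg (pow_nonneg hq.le _),
      abs_of_nonneg (by positivity : (0:ℝ) ≤ (n:ℝ) * (2 * ((ν:ℝ) + 1) + 1) ^ 2), hpow]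
    calc q ^ n * A ^ (ν + 1) / ((n:ℝ) * (2 * ((ν:ℝ) + 1) + 1) ^ 2)
          * |Real.sin ((2 * ((ν:ℝ) + 1) + 1) * θ * π - β * π / 2)|
        ≤ q ^ n * A ^ (ν + 1) / ((n:ℝ) * (2 * ((ν:ℝ) + 1) + 1) ^ 2) * 1 :=
          mul_le_mul_of_nonneg_left hs (by positivity)
      _ = q ^ n * A ^ (ν + 1) / ((n:ℝ) * (2 * ((ν:ℝ) + 1) + 1) ^ 2) := mul_one _
      _ ≤ q ^ n * A ^ (ν + 1) / ((n:ℝ) * 9) :=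
          div_le_div_of_nonneg_left (by positivity) (by positivity) hd
      _ = q ^ n / (n:ℝ) * (A ^ (ν + 1) / 9) := by ring
  have hTg : |∑' ν : ℕ, g (ν + 1)| ≤ q ^ n / (n:ℝ) * (M / 9) := by
    have h1 : |∑' ν : ℕ, g (ν + 1)| ≤ ∑' ν : ℕ, |g (ν + 1)| := by
      simpa [Real.norm_eq_abs] using norm_tsum_le_tsum_norm (f := fun ν : ℕ => g (ν + 1))
        (by simpa [Real.norm_eq_abs] using hgs1.abs)
    have h2 : ∑' ν : ℕ, |g (ν + 1)| ≤ ∑' ν : ℕ, q ^ n / (n:ℝ) * (A ^ (ν + 1) / 9) :=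
      Summable.tsum_le_tsum hgb hgs1.abs ((hgeo1.div_const 9).mul_left _)
    have h3 : ∑' ν : ℕ, q ^ n / (n:ℝ) * (A ^ (ν + 1) / 9) = q ^ n / (n:ℝ) * (M / 9) := by
      rw [tsum_mul_left, tsum_div_const, hgeo1sum]
    linarith
  have hg0 : g 0 = q ^ n / (n:ℝ) * Real.sin (θ * π - β * π / 2) := by
    rw [hgdef]; norm_num
  have hsplitg : ∑' ν : ℕ, g ν = g 0 + ∑' ν : ℕ, g (ν + 1) := Summable.tsum_eq_zero_add hgs
  have hP : (0:ℝ) ≤ q ^ n / (n:ℝ) := by positivity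
  have hg0abs : |g 0| = q ^ n / (n:ℝ) * |Real.sin (θ * π - β * π / 2)| := by
    rw [hg0, abs_mul, abs_of_nonneg hP]
  have habs : |g 0| - |∑' ν : ℕ, g (ν + 1)| ≤ |∑' ν : ℕ, g ν| := by
    have := abs_add_le (∑' ν : ℕ, g ν) (-(∑' ν : ℕ, g (ν + 1)))
    rw [abs_neg] at this
    have h0 : g 0 = (∑' ν : ℕ, g ν) + -(∑' ν : ℕ, g (ν + 1)) := by rw [hsplitg]; ring
    calc |g 0| - |∑' ν : ℕ, g (ν + 1)|
        ≤ (|∑' ν : ℕ, g ν| + |∑' ν : ℕ, g (ν + 1)|) - |∑' ν : ℕ, g (ν + 1)| := by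
          rw [h0]; linarith
      _ = |∑' ν : ℕ, g ν| := by ring
  have hmul : q ^ n / (n:ℝ) * (1 - M / 3) ≤ q ^ n / (n:ℝ) * |Real.sin (θ * π - β * π / 2)| :=
    mul_le_mul_of_nonneg_left hs0 hP
  calc q ^ n / (n:ℝ) * (1 - 4 / 9 * M)
      = q ^ n / (n:ℝ) * (1 - M / 3) - q ^ n / (n:ℝ) * (M / 9) := by ring
    _ ≤ |g 0| - |∑' ν : ℕ, g (ν + 1)| := by rw [hg0abs]; linarith
    _ ≤ |∑' ν : ℕ, g ν| := habs
end

section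
/- Let q ∈ (0,1), n ∈ ℕ, β ∈ ℝ, and let θ ∈ [0,1) be a root of ∑_{ν=0}^∞ (q^{2νn}/(2ν+1)) cos((2ν+1)θπ − βπ/2) = 0. Then |∑_{ν=0}^∞ (q^{(2ν+1)n}/(n(2ν+1)²)) sin((2ν+1)θπ − βπ/2)| ≤ (q^n/n)(1 + (4/9)·q^{2n}/(1−q^{2n})). -/
open Real

theorem stmt_4 (q : ℝ) (hq : 0 < q) (hq1 : q < 1) (n : ℕ) (hn : 1 ≤ n) (β θ : ℝ)
    (hθ0 : 0 ≤ θ) (hθ1 : θ < 1)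
    (hroot : ∑' ν : ℕ, q ^ (2 * ν * n) / (2 * (ν : ℝ) + 1)
        * Real.cos ((2 * ν + 1) * θ * π - β * π / 2) = 0) :
    |∑' ν : ℕ, q ^ ((2 * ν + 1) * n) / ((n : ℝ) * (2 * ν + 1) ^ 2)
        * Real.sin ((2 * ν + 1) * θ * π - β * π / 2)|
      ≤ q ^ n / n * (1 + 4 / 9 * (q ^ (2 * n) / (1 - q ^ (2 * n)))) := by
  set r : ℝ := q ^ (2 * n) with hrdef
  have hr0 : 0 < r := pow_pos hq _
  have hr1 : r < 1 := pow_lt_one₀ hq.le hq1 (by omega)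
  have hn0 : (0:ℝ) < n := by exact_mod_cast hn
  have hqn : 0 < q ^ n := pow_pos hq n
  set f : ℕ → ℝ := fun ν => q ^ ((2 * ν + 1) * n) / ((n : ℝ) * (2 * ν + 1) ^ 2)
        * Real.sin ((2 * ν + 1) * θ * π - β * π / 2) with hf
  have hpow : ∀ ν : ℕ, q ^ ((2 * ν + 1) * n) = q ^ n * r ^ ν := by
    intro ν
    rw [hrdef, ← pow_mul, ← pow_add]
    congr 1
    ring
  have hb : ∀ ν : ℕ, |f ν| ≤ q ^ n / n * r ^ ν / (2 * (ν:ℝ) + 1) ^ 2 := by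
    intro ν
    have hden : (0:ℝ) < (2 * (ν:ℝ) + 1) ^ 2 := by positivity
    have : |f ν| ≤ q ^ ((2 * ν + 1) * n) / ((n : ℝ) * (2 * ν + 1) ^ 2) := by
      rw [hf]
      simp only [abs_mul]
      have h1 : |q ^ ((2 * ν + 1) * n) / ((n : ℝ) * (2 * ν + 1) ^ 2)|
          = q ^ ((2 * ν + 1) * n) / ((n : ℝ) * (2 * ν + 1) ^ 2) := by
        apply abs_of_nonneg; positivity
      rw [h1]
      calc q ^ ((2 * ν + 1) * n) / ((n : ℝ) * (2 * ν + 1) ^ 2) * |Real.sin _|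
          ≤ q ^ ((2 * ν + 1) * n) / ((n : ℝ) * (2 * ν + 1) ^ 2) * 1 := by
            apply mul_le_mul_of_nonneg_left (abs_sin_le_one _) (by positivity)
        _ = q ^ ((2 * ν + 1) * n) / ((n : ℝ) * (2 * ν + 1) ^ 2) := mul_one _
    refine this.trans_eq ?_
    rw [hpow ν]
    field_simp
  have hsumg : Summable (fun ν : ℕ => q ^ n / n * r ^ ν) :=
    (summable_geometric_of_lt_one hr0.le hr1).mul_left _
  have hb' : ∀ ν : ℕ, |f ν| ≤ q ^ n / n * r ^ ν := by
    intro ν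
    refine (hb ν).trans ?_
    have hden : (1:ℝ) ≤ (2 * (ν:ℝ) + 1) ^ 2 := by nlinarith [Nat.cast_nonneg (α := ℝ) ν]
    calc q ^ n / n * r ^ ν / (2 * (ν:ℝ) + 1) ^ 2 ≤ q ^ n / n * r ^ ν / 1 := by
          apply div_le_div_of_nonneg_left (by positivity) (by norm_num) hden
      _ = q ^ n / n * r ^ ν := by ring
  have hsumf : Summable f := by
    apply Summable.of_norm
    exact Summable.of_nonneg_of_le (fun ν => norm_nonneg _) (fun ν => hb' ν) hsumg
  have habs : Summable (fun ν => |f ν|) := hsumf.abs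
  have h0 : |∑' ν, f ν| ≤ ∑' ν, |f ν| := by
    simpa using norm_tsum_le_tsum_norm hsumf.norm
  have hsplit : ∑' ν, |f ν| = |f 0| + ∑' ν, |f (ν + 1)| := by
    exact (Summable.tsum_eq_zero_add habs)
  have htail : ∑' ν : ℕ, |f (ν + 1)| ≤ q ^ n / (9 * n) * (r / (1 - r)) := by
    have h1 : ∀ ν : ℕ, |f (ν + 1)| ≤ q ^ n / (9 * n) * r ^ (ν + 1) := by
      intro ν
      refine (hb (ν + 1)).trans ?_
      have hden : (9:ℝ) ≤ (2 * ((ν:ℝ)+1) + 1) ^ 2 := by nlinarith [Nat.cast_nonneg (α := ℝ) ν]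
      have : q ^ n / n * r ^ (ν + 1) / (2 * ((ν+1:ℕ):ℝ) + 1) ^ 2
          ≤ q ^ n / n * r ^ (ν + 1) / 9 := by
        push_cast
        apply div_le_div_of_nonneg_left (by positivity) (by norm_num) (by push_cast at hden ⊢; linarith)
      refine this.trans_eq ?_
      field_simp
    have h2 : Summable (fun ν : ℕ => q ^ n / (9 * n) * r ^ (ν + 1)) := by
      apply Summable.mul_left
      exact (summable_geometric_of_lt_one hr0.le hr1).comp_injective (add_left_injective 1)
    calc ∑' ν : ℕ, |f (ν + 1)|
        ≤ ∑' ν : ℕ, q ^ n / (9 * n) * r ^ (ν + 1) := by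
          apply Summable.tsum_le_tsum h1 (habs.comp_injective (add_left_injective 1)) h2
      _ = q ^ n / (9 * n) * (r * ∑' ν : ℕ, r ^ ν) := by
          rw [← tsum_mul_left, ← tsum_mul_left]
          congr 1; ext ν; ring
      _ = q ^ n / (9 * n) * (r / (1 - r)) := by
          rw [tsum_geometric_of_lt_one hr0.le hr1]
          ring
  have hf0 : |f 0| ≤ q ^ n / n := by
    have := hb' 0
    simpa using this
  have hd0 : 0 ≤ r / (1 - r) := by
    apply div_nonneg hr0.le; linarith
  calc |∑' ν, f ν| ≤ |f 0| + ∑' ν, |f (ν + 1)| := by rw [← hsplit]; exact h0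
    _ ≤ q ^ n / n + q ^ n / (9 * n) * (r / (1 - r)) := add_le_add hf0 htail
    _ ≤ q ^ n / n * (1 + 4 / 9 * (r / (1 - r))) := by
        have e : q ^ n / (9 * n) * (r / (1 - r)) = q ^ n / n * (1 / 9 * (r / (1 - r))) := by
          field_simp
        rw [e]
        have h : (1:ℝ) / 9 * (r / (1 - r)) ≤ 4 / 9 * (r / (1 - r)) := by nlinarith
        nlinarith [mul_le_mul_of_nonneg_left h (le_of_lt (div_pos hqn hn0))]
end

section
/- Let q ∈ (0,1), n ∈ ℕ, β ∈ ℝ. Then the equation ∑_{ν=0}^∞ (q^{2νn}/(2ν+1)) cos((2ν+1)θπ − βπ/2) = 0 has exactly one root θ in the interval [0,1). -/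
open Real

namespace Stmt9Aux

noncomputable def Lf (ρ θ : ℝ) : ℝ :=
  (Real.log (1 + ρ^2 + 2*ρ*Real.cos (θ*π)) - Real.log (1 + ρ^2 - 2*ρ*Real.cos (θ*π))) / 2

noncomputable def Af (ρ θ : ℝ) : ℝ :=
  Real.arctan (2*ρ*Real.sin (θ*π) / (1 - ρ^2))

lemma P_pos {ρ : ℝ} (hρ0 : 0 < ρ) (hρ1 : ρ < 1) (x : ℝ) : 0 < 1 + ρ^2 + 2*ρ*Real.cos x := by
  nlinarith [Real.neg_one_le_cos x]

lemma M_pos {ρ : ℝ} (hρ0 : 0 < ρ) (hρ1 : ρ < 1) (x : ℝ) : 0 < 1 + ρ^2 - 2*ρ*Real.cos x := by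
  nlinarith [Real.cos_le_one x]

variable {ρ θ θ₁ θ₂ : ℝ}

lemma Lf_pos_of (hρ0 : 0 < ρ) (hρ1 : ρ < 1) (hc : 0 < Real.cos (θ*π)) : 0 < Lf ρ θ := by
  have h := Real.log_lt_log (M_pos hρ0 hρ1 (θ*π)) (show 1 + ρ^2 - 2*ρ*Real.cos (θ*π) < 1 + ρ^2 + 2*ρ*Real.cos (θ*π) by nlinarith)
  unfold Lf; linarith

lemma Lf_neg_of (hρ0 : 0 < ρ) (hρ1 : ρ < 1) (hc : Real.cos (θ*π) < 0) : Lf ρ θ < 0 := by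
  have h := Real.log_lt_log (P_pos hρ0 hρ1 (θ*π)) (show 1 + ρ^2 + 2*ρ*Real.cos (θ*π) < 1 + ρ^2 - 2*ρ*Real.cos (θ*π) by nlinarith)
  unfold Lf; linarith

lemma Lf_nonpos_of (hρ0 : 0 < ρ) (hρ1 : ρ < 1) (hc : Real.cos (θ*π) ≤ 0) : Lf ρ θ ≤ 0 := by
  have h := Real.log_le_log (P_pos hρ0 hρ1 (θ*π)) (show 1 + ρ^2 + 2*ρ*Real.cos (θ*π) ≤ 1 + ρ^2 - 2*ρ*Real.cos (θ*π) by nlinarith)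
  unfold Lf; linarith

lemma Lf_lt (hρ0 : 0 < ρ) (hρ1 : ρ < 1) (h0 : 0 ≤ θ₁) (h : θ₁ < θ₂) (h1 : θ₂ ≤ 1) :
    Lf ρ θ₂ < Lf ρ θ₁ := by
  have hπ := Real.pi_pos
  have hc : Real.cos (θ₂*π) < Real.cos (θ₁*π) := by
    apply Real.strictAntiOn_cos
    · constructor <;> nlinarith
    · constructor <;> nlinarith
    · nlinarith
  have hP := Real.log_lt_log (P_pos hρ0 hρ1 (θ₂*π)) (show 1 + ρ^2 + 2*ρ*Real.cos (θ₂*π) < 1 + ρ^2 + 2*ρ*Real.cos (θ₁*π) by nlinarith)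
  have hM := Real.log_lt_log (M_pos hρ0 hρ1 (θ₁*π)) (show 1 + ρ^2 - 2*ρ*Real.cos (θ₁*π) < 1 + ρ^2 - 2*ρ*Real.cos (θ₂*π) by nlinarith)
  unfold Lf; linarith

lemma Af_zero : Af ρ 0 = 0 := by simp [Af]

lemma Af_one : Af ρ 1 = 0 := by simp [Af]

lemma Lf_one (hρ0 : 0 < ρ) (hρ1 : ρ < 1) : Lf ρ 1 = - Lf ρ 0 := by
  unfold Lf
  rw [one_mul, Real.cos_pi, zero_mul, Real.cos_zero]
  ring

lemma Af_pos (hρ0 : 0 < ρ) (hρ1 : ρ < 1) (h0 : 0 < θ) (h1 : θ < 1) : 0 < Af ρ θ := by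
  have hπ := Real.pi_pos
  have hs : 0 < Real.sin (θ*π) := Real.sin_pos_of_pos_of_lt_pi (by nlinarith) (by nlinarith)
  have : (0:ℝ) < 2*ρ*Real.sin (θ*π) / (1 - ρ^2) := by
    apply div_pos (by nlinarith) (by nlinarith)
  unfold Af
  calc (0:ℝ) = Real.arctan 0 := Real.arctan_zero.symm
  _ < _ := Real.arctan_strictMono this

lemma Af_lt_left (hρ0 : 0 < ρ) (hρ1 : ρ < 1) (h0 : 0 ≤ θ₁) (h : θ₁ < θ₂) (h1 : θ₂ ≤ 1/2) :
    Af ρ θ₁ < Af ρ θ₂ := by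
  have hπ := Real.pi_pos
  have hs : Real.sin (θ₁*π) < Real.sin (θ₂*π) := by
    apply Real.strictMonoOn_sin
    · constructor <;> nlinarith
    · constructor <;> nlinarith
    · nlinarith
  apply Real.arctan_strictMono
  have h2 : (0:ℝ) < 1 - ρ^2 := by nlinarith
  gcongr

lemma Af_lt_right (hρ0 : 0 < ρ) (hρ1 : ρ < 1) (h0 : 1/2 ≤ θ₁) (h : θ₁ < θ₂) (h1 : θ₂ ≤ 1) :
    Af ρ θ₂ < Af ρ θ₁ := by
  have hπ := Real.pi_pos
  have hs : Real.sin (θ₂*π) < Real.sin (θ₁*π) := by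
    rw [← Real.sin_pi_sub (θ₁*π), ← Real.sin_pi_sub (θ₂*π)]
    apply Real.strictMonoOn_sin
    · constructor <;> nlinarith
    · constructor <;> nlinarith
    · nlinarith
  apply Real.arctan_strictMono
  have h2 : (0:ℝ) < 1 - ρ^2 := by nlinarith
  gcongr

lemma cos_theta_pi_pos (h0 : 0 ≤ θ) (h1 : θ < 1/2) : 0 < Real.cos (θ*π) := by
  have hπ := Real.pi_pos
  apply Real.cos_pos_of_mem_Ioo
  constructor <;> nlinarith

lemma cos_theta_pi_neg (h0 : 1/2 < θ) (h1 : θ ≤ 1) : Real.cos (θ*π) < 0 := by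
  have hπ := Real.pi_pos
  apply Real.cos_neg_of_pi_div_two_lt_of_lt <;> nlinarith

lemma Lf_half (hρ0 : 0 < ρ) (hρ1 : ρ < 1) : Lf ρ (1/2) = 0 := by
  unfold Lf
  rw [show (1/2 : ℝ)*π = π/2 by ring, Real.cos_pi_div_two]
  ring

lemma D_pos (hρ0 : 0 < ρ) (hρ1 : ρ < 1) (h0 : 0 ≤ θ₁) (h12 : θ₁ < θ₂) (h1 : θ₂ < 1) :
    0 < Lf ρ θ₁ * Af ρ θ₂ - Lf ρ θ₂ * Af ρ θ₁ := by
  have hA2 : 0 < Af ρ θ₂ := Af_pos hρ0 hρ1 (lt_of_le_of_lt h0 h12) h1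
  rcases eq_or_lt_of_le h0 with h0'|h0'
  · subst h0'
    rw [Af_zero, mul_zero, sub_zero]
    exact mul_pos (Lf_pos_of hρ0 hρ1 (cos_theta_pi_pos le_rfl one_half_pos)) hA2
  have hA1 : 0 < Af ρ θ₁ := Af_pos hρ0 hρ1 h0' (h12.trans h1)
  by_cases hb : θ₂ ≤ 1/2
  · have hL2 : 0 ≤ Lf ρ θ₂ := by
      rcases eq_or_lt_of_le hb with hb'|hb'
      · rw [hb', Lf_half hρ0 hρ1]
      · exact (Lf_pos_of hρ0 hρ1 (cos_theta_pi_pos (h0.trans h12.le) hb')).le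
    have hL12 : Lf ρ θ₂ < Lf ρ θ₁ := Lf_lt hρ0 hρ1 h0 h12 (by linarith)
    have hA12 : Af ρ θ₁ < Af ρ θ₂ := Af_lt_left hρ0 hρ1 h0 h12 hb
    nlinarith
  push_neg at hb
  by_cases ha : θ₁ < 1/2
  · have hL1 : 0 < Lf ρ θ₁ := Lf_pos_of hρ0 hρ1 (cos_theta_pi_pos h0 ha)
    have hL2 : Lf ρ θ₂ ≤ 0 := Lf_nonpos_of hρ0 hρ1 (cos_theta_pi_neg hb h1.le).le
    nlinarith
  push_neg at ha
  rcases eq_or_lt_of_le ha with ha'|ha'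
  · subst ha'
    rw [Lf_half hρ0 hρ1, zero_mul]
    have hL2 : Lf ρ θ₂ < 0 := Lf_neg_of hρ0 hρ1 (cos_theta_pi_neg hb h1.le)
    nlinarith
  · have hL1 : Lf ρ θ₁ < 0 := Lf_neg_of hρ0 hρ1 (cos_theta_pi_neg ha' (by linarith))
    have hL2 : Lf ρ θ₂ < Lf ρ θ₁ := Lf_lt hρ0 hρ1 h0 h12 h1.le
    have hA21 : Af ρ θ₂ < Af ρ θ₁ := Af_lt_right hρ0 hρ1 ha h12 h1.le
    have key : (-Lf ρ θ₁) * Af ρ θ₂ < (-Lf ρ θ₂) * Af ρ θ₁ :=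
      mul_lt_mul (by linarith) hA21.le hA2 (by linarith)
    linarith

lemma G_cont (hρ0 : 0 < ρ) (hρ1 : ρ < 1) (c : ℝ) :
    Continuous (fun θ : ℝ => Real.cos c * Lf ρ θ + Real.sin c * Af ρ θ) := by
  have hP : Continuous fun θ : ℝ => 1 + ρ^2 + 2*ρ*Real.cos (θ*π) := by fun_prop
  have hM : Continuous fun θ : ℝ => 1 + ρ^2 - 2*ρ*Real.cos (θ*π) := by fun_prop
  have hL : Continuous fun θ : ℝ => Lf ρ θ := by
    unfold Lf
    exact ((hP.log (fun θ => (P_pos hρ0 hρ1 (θ*π)).ne')).sub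
      (hM.log (fun θ => (M_pos hρ0 hρ1 (θ*π)).ne'))).div_const 2
  have hA : Continuous fun θ : ℝ => Af ρ θ := by
    unfold Af
    exact Real.continuous_arctan.comp (by fun_prop)
  fun_prop

lemma exists_zero (hρ0 : 0 < ρ) (hρ1 : ρ < 1) (c : ℝ) :
    ∃ θ ∈ Set.Ico (0:ℝ) 1, Real.cos c * Lf ρ θ + Real.sin c * Af ρ θ = 0 := by
  set G := fun θ : ℝ => Real.cos c * Lf ρ θ + Real.sin c * Af ρ θ with hG
  have hG1 : G 1 = -G 0 := by
    simp only [hG, Af_zero, Af_one, Lf_one hρ0 hρ1, mul_zero, add_zero]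
    ring
  rcases lt_trichotomy (G 0) 0 with h|h|h
  · have hiv := intermediate_value_Ioo (zero_le_one) ((G_cont hρ0 hρ1 c).continuousOn (s := Set.Icc 0 1))
    obtain ⟨θ, hθ, hGθ⟩ := hiv (show (0:ℝ) ∈ Set.Ioo (G 0) (G 1) by constructor <;> linarith)
    exact ⟨θ, ⟨hθ.1.le, hθ.2⟩, hGθ⟩
  · exact ⟨0, ⟨le_refl 0, zero_lt_one⟩, h⟩
  · have hiv := intermediate_value_Ioo' (zero_le_one) ((G_cont hρ0 hρ1 c).continuousOn (s := Set.Icc 0 1))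
    obtain ⟨θ, hθ, hGθ⟩ := hiv (show (0:ℝ) ∈ Set.Ioo (G 1) (G 0) by constructor <;> linarith)
    exact ⟨θ, ⟨hθ.1.le, hθ.2⟩, hGθ⟩

lemma zeros_eq (hρ0 : 0 < ρ) (hρ1 : ρ < 1) {c : ℝ} (h₁ : θ₁ ∈ Set.Ico (0:ℝ) 1)
    (h₂ : θ₂ ∈ Set.Ico (0:ℝ) 1)
    (hz₁ : Real.cos c * Lf ρ θ₁ + Real.sin c * Af ρ θ₁ = 0)
    (hz₂ : Real.cos c * Lf ρ θ₂ + Real.sin c * Af ρ θ₂ = 0) : θ₁ = θ₂ := by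
  have key : ∀ a b : ℝ, a ∈ Set.Ico (0:ℝ) 1 → b ∈ Set.Ico (0:ℝ) 1 → a < b →
      Real.cos c * Lf ρ a + Real.sin c * Af ρ a = 0 →
      Real.cos c * Lf ρ b + Real.sin c * Af ρ b = 0 → False := by
    intro a b ha hb hab hza hzb
    have hD := D_pos hρ0 hρ1 ha.1 hab hb.2
    have h3 : Real.cos c * (Lf ρ a * Af ρ b - Lf ρ b * Af ρ a) = 0 := by
      linear_combination (Af ρ b) * hza - (Af ρ a) * hzb
    have h4 : Real.sin c * (Lf ρ a * Af ρ b - Lf ρ b * Af ρ a) = 0 := by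
      linear_combination (Lf ρ a) * hzb - (Lf ρ b) * hza
    have hc0 : Real.cos c = 0 := by
      rcases mul_eq_zero.mp h3 with h|h
      · exact h
      · exact absurd h hD.ne'
    have hs0 : Real.sin c = 0 := by
      rcases mul_eq_zero.mp h4 with h|h
      · exact h
      · exact absurd h hD.ne'
    nlinarith [Real.sin_sq_add_cos_sq c]
  rcases lt_trichotomy θ₁ θ₂ with h|h|h
  · exact absurd (key θ₁ θ₂ h₁ h₂ h hz₁ hz₂) (not_false)
  · exact h
  · exact absurd (key θ₂ θ₁ h₂ h₁ h hz₂ hz₁) (not_false)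

lemma arg_eq_arctan {z : ℂ} (hz : 0 < z.re) : z.arg = Real.arctan (z.im / z.re) := by
  have h1 : |z.arg| < π/2 := Complex.abs_arg_lt_pi_div_two_iff.mpr (Or.inl hz)
  have h2 := abs_lt.mp h1
  rw [← Real.arctan_tan (x := z.arg) (by linarith) h2.2, Complex.tan_arg]


lemma hasSum_odd_log {w : ℂ} (hw : ‖w‖ < 1) :
    HasSum (fun ν : ℕ => w ^ (2*ν+1) / (2*(ν:ℂ)+1))
      ((Complex.log (1+w) - Complex.log (1-w)) / 2) := by
  have h := ((Complex.hasSum_taylorSeries_log hw).add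
    (Complex.hasSum_taylorSeries_neg_log hw)).div_const 2
  rw [sub_eq_add_neg]
  have he : Function.Injective (fun ν : ℕ => 2*ν+1) := fun a b hab => by
    simpa using hab
  have h0 : ∀ m ∉ Set.range (fun ν : ℕ => 2*ν+1),
      ((-1:ℂ)^(m+1) * w^m/(m:ℂ) + w^m/(m:ℂ))/2 = 0 := by
    intro m hm
    have hme : Even m := by
      rcases Nat.even_or_odd m with h' | h'
      · exact h'
      · obtain ⟨k, hk⟩ := h'
        exact absurd ⟨k, hk.symm⟩ hm
    rw [Odd.neg_one_pow hme.add_one]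
    ring
  have h2 := (Function.Injective.hasSum_iff he h0).mpr h
  convert h2 using 2 with ν
  have : ((-1:ℂ))^(2*ν+1+1) = 1 := by
    rw [Even.neg_one_pow ⟨ν+1, by ring⟩]
  simp only [Function.comp_apply, this]
  push_cast
  ring

lemma hasSum_closed {ρ : ℝ} (hρ0 : 0 < ρ) (hρ1 : ρ < 1) (c θ : ℝ) :
    HasSum (fun ν : ℕ => ρ^(2*ν)/(2*(ν:ℝ)+1) * Real.cos ((2*(ν:ℝ)+1)*(θ*π) - c))
      ((Real.cos c * Lf ρ θ + Real.sin c * Af ρ θ) / (2*ρ)) := by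
  set φ := θ*π with hφ
  set w : ℂ := (ρ:ℂ) * Complex.exp ((φ:ℂ) * Complex.I) with hwdef
  have hwre : w.re = ρ * Real.cos φ := by
    rw [hwdef, Complex.re_ofReal_mul, Complex.exp_ofReal_mul_I_re]
  have hwim : w.im = ρ * Real.sin φ := by
    rw [hwdef, Complex.im_ofReal_mul, Complex.exp_ofReal_mul_I_im]
  have hw1 : ‖w‖ < 1 := by
    rw [hwdef, norm_mul, Complex.norm_exp_ofReal_mul_I]
    simpa [abs_of_pos hρ0] using hρ1
  have hsc := Real.sin_sq_add_cos_sq φ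
  have hρc1 : 0 < 1 + ρ * Real.cos φ := by nlinarith [Real.neg_one_le_cos φ]
  have hρc2 : 0 < 1 - ρ * Real.cos φ := by nlinarith [Real.cos_le_one φ]
  have h1 := ((hasSum_odd_log hw1).mul_left (Complex.exp (-(c:ℂ) * Complex.I)))
  have h2 := (Complex.hasSum_re h1).div_const ρ
  have hterm : ∀ ν : ℕ,
      (Complex.exp (-(c:ℂ)*Complex.I) * (w^(2*ν+1)/(2*(ν:ℂ)+1))).re / ρ
        = ρ^(2*ν)/(2*(ν:ℝ)+1) * Real.cos ((2*(ν:ℝ)+1)*φ - c) := by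
    intro ν
    have hwp : w^(2*ν+1)
        = ((ρ^(2*ν+1) : ℝ) : ℂ) * Complex.exp ((((2*(ν:ℝ)+1)*φ : ℝ) : ℂ) * Complex.I) := by
      rw [hwdef, mul_pow, ← Complex.exp_nat_mul]
      push_cast
      ring_nf
    have hkey : Complex.exp (-(c:ℂ)*Complex.I) * (w^(2*ν+1)/(2*(ν:ℂ)+1))
        = ((ρ^(2*ν+1)/(2*(ν:ℝ)+1) : ℝ) : ℂ)
            * Complex.exp ((((2*(ν:ℝ)+1)*φ - c : ℝ) : ℂ) * Complex.I) := by
      rw [hwp, show ((((2*(ν:ℝ)+1)*φ - c : ℝ) : ℂ) * Complex.I)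
          = -(c:ℂ)*Complex.I + (((2*(ν:ℝ)+1)*φ : ℝ) : ℂ) * Complex.I by push_cast; ring,
        Complex.exp_add]
      push_cast
      have h2ν : (2*(ν:ℂ)+1) ≠ 0 := by
        have : ((2*ν+1 : ℕ) : ℂ) ≠ 0 := Nat.cast_ne_zero.mpr (by omega)
        push_cast at this
        exact this
      field_simp
    rw [hkey, Complex.re_ofReal_mul, Complex.exp_ofReal_mul_I_re, pow_succ]
    have hν : (2*(ν:ℝ)+1) ≠ 0 := by positivity
    field_simp
  have hvalue : (Complex.exp (-(c:ℂ)*Complex.I)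
        * ((Complex.log (1+w) - Complex.log (1-w)) / 2)).re / ρ
      = (Real.cos c * Lf ρ θ + Real.sin c * Af ρ θ) / (2*ρ) := by
    have hexp : Complex.exp (-(c:ℂ)*Complex.I) = Complex.exp (((-c : ℝ):ℂ) * Complex.I) := by
      push_cast; ring_nf
    have hZre : (Complex.log (1+w) - Complex.log (1-w)).re = Lf ρ θ := by
      rw [Complex.sub_re, Complex.log_re, Complex.log_re]
      have habs1 : ‖1+w‖ = Real.sqrt (1 + ρ^2 + 2*ρ*Real.cos φ) := by
        rw [Complex.norm_def]
        congr 1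
        rw [Complex.normSq_apply, Complex.add_re, Complex.add_im, Complex.one_re,
          Complex.one_im, hwre, hwim]
        nlinarith [hsc]
      have habs2 : ‖1-w‖ = Real.sqrt (1 + ρ^2 - 2*ρ*Real.cos φ) := by
        rw [Complex.norm_def]
        congr 1
        rw [Complex.normSq_apply, Complex.sub_re, Complex.sub_im, Complex.one_re,
          Complex.one_im, hwre, hwim]
        nlinarith [hsc]
      rw [habs1, habs2, Real.log_sqrt (by nlinarith [Real.neg_one_le_cos φ]),
        Real.log_sqrt (by nlinarith [Real.cos_le_one φ])]
      rw [Lf]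
      ring
    have hZim : (Complex.log (1+w) - Complex.log (1-w)).im = Af ρ θ := by
      rw [Complex.sub_im, Complex.log_im, Complex.log_im]
      have harg1 : (1+w).arg = Real.arctan (ρ*Real.sin φ / (1 + ρ*Real.cos φ)) := by
        rw [arg_eq_arctan (by rw [Complex.add_re, Complex.one_re, hwre]; exact hρc1)]
        rw [Complex.add_re, Complex.add_im, Complex.one_re, Complex.one_im, hwre, hwim]
        norm_num
      have harg2 : (1-w).arg = - Real.arctan (ρ*Real.sin φ / (1 - ρ*Real.cos φ)) := by
        rw [arg_eq_arctan (by rw [Complex.sub_re, Complex.one_re, hwre]; exact hρc2)]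
        rw [Complex.sub_re, Complex.sub_im, Complex.one_re, Complex.one_im, hwre, hwim]
        rw [show (0 - ρ*Real.sin φ) / (1 - ρ*Real.cos φ)
            = -(ρ*Real.sin φ / (1 - ρ*Real.cos φ)) by ring, Real.arctan_neg]
      rw [harg1, harg2, sub_neg_eq_add]
      have hsq : ρ^2*(Real.sin φ^2 + Real.cos φ^2) = ρ^2 := by rw [hsc]; ring
      have hρ2 : ρ^2 < 1 := by nlinarith
      have hlt : (ρ*Real.sin φ / (1 + ρ*Real.cos φ)) * (ρ*Real.sin φ / (1 - ρ*Real.cos φ)) < 1 := by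
        rw [div_mul_div_comm, div_lt_one (by nlinarith)]
        nlinarith [hsq]
      rw [Real.arctan_add hlt, Af]
      congr 1
      have hD : (0:ℝ) < (1 + ρ*Real.cos φ)*(1 - ρ*Real.cos φ) := mul_pos hρc1 hρc2
      have e1 : ρ*Real.sin φ/(1 + ρ*Real.cos φ) + ρ*Real.sin φ/(1 - ρ*Real.cos φ)
          = 2*ρ*Real.sin φ / ((1 + ρ*Real.cos φ)*(1 - ρ*Real.cos φ)) := by
        rw [div_add_div _ _ hρc1.ne' hρc2.ne']
        congr 1
        ring
      have e2 : 1 - ρ*Real.sin φ/(1 + ρ*Real.cos φ) * (ρ*Real.sin φ/(1 - ρ*Real.cos φ))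
          = (1 - ρ^2)/((1 + ρ*Real.cos φ)*(1 - ρ*Real.cos φ)) := by
        rw [div_mul_div_comm, eq_div_iff hD.ne', sub_mul, div_mul_cancel₀ _ hD.ne']
        linear_combination -hsq
      rw [e1, e2, div_div_div_cancel_right₀]
      exact hD.ne'
    rw [show Complex.exp (-(c:ℂ)*Complex.I) * ((Complex.log (1+w) - Complex.log (1-w))/2)
        = (Complex.exp (((-c:ℝ):ℂ)*Complex.I) * (Complex.log (1+w) - Complex.log (1-w)))/((2:ℝ):ℂ) by
      push_cast; ring]
    rw [Complex.div_ofReal_re, Complex.mul_re, Complex.exp_ofReal_mul_I_re,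
      Complex.exp_ofReal_mul_I_im, Real.cos_neg, Real.sin_neg, hZre, hZim]
    rw [div_div]
    ring
  rw [← hvalue]
  exact HasSum.congr_fun h2 (fun ν => (hterm ν).symm)

end Stmt9Aux

open Stmt9Aux in
theorem stmt_9 (q : ℝ) (hq : 0 < q) (hq1 : q < 1) (n : ℕ) (hn : 1 ≤ n) (β : ℝ) :
    ∃! θ : ℝ, θ ∈ Set.Ico (0 : ℝ) 1 ∧
      ∑' ν : ℕ, q ^ (2 * ν * n) / (2 * (ν : ℝ) + 1)
        * Real.cos ((2 * ν + 1) * θ * π - β * π / 2) = 0 := by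
  set ρ := q^n with hρdef
  have hρ0 : 0 < ρ := pow_pos hq n
  have hρ1 : ρ < 1 := pow_lt_one₀ hq.le hq1 (by omega)
  set c := β * π / 2 with hcdef
  have hsum : ∀ θ : ℝ, (∑' ν : ℕ, q ^ (2 * ν * n) / (2 * (ν : ℝ) + 1)
        * Real.cos ((2 * ν + 1) * θ * π - c))
      = (Real.cos c * Lf ρ θ + Real.sin c * Af ρ θ) / (2*ρ) := by
    intro θ
    have h := hasSum_closed hρ0 hρ1 c θ
    rw [← h.tsum_eq]
    congr 1
    funext ν
    rw [show 2 * ν * n = n * (2 * ν) by ring, pow_mul, ← hρdef, mul_assoc]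
  have hzero : ∀ θ : ℝ, ((∑' ν : ℕ, q ^ (2 * ν * n) / (2 * (ν : ℝ) + 1)
        * Real.cos ((2 * ν + 1) * θ * π - c)) = 0
      ↔ Real.cos c * Lf ρ θ + Real.sin c * Af ρ θ = 0) := by
    intro θ
    rw [hsum θ, div_eq_zero_iff]
    constructor
    · rintro (h|h)
      · exact h
      · nlinarith
    · exact Or.inl
  obtain ⟨θ₀, hθ₀, hG0⟩ := exists_zero hρ0 hρ1 c
  refine ⟨θ₀, ⟨hθ₀, (hzero θ₀).mpr hG0⟩, ?_⟩
  rintro θ' ⟨hθ', hs'⟩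
  exact zeros_eq hρ0 hρ1 hθ' hθ₀ ((hzero θ').mp hs') hG0
end

section
/- For q ∈ (0,1), n ∈ ℕ, and integer j with 0 ≤ j ≤ n−1, ∑_{m=1}^∞ (q^{(2m+1)n−j}/((2m+1)n−j)² + q^{(2m+1)n+j}/((2m+1)n+j)²) ≤ q^{2n}/(4n²(1−q^{2n})). -/
open Real

lemma fourexp (q : ℝ) (hq : 0 ≤ q) (hq1 : q ≤ 1) (a b c d : ℕ)
    (hab : a ≤ b) (hac : a ≤ c) (h : a + d = b + c) :
    q ^ b + q ^ c ≤ q ^ a + q ^ d := by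
  obtain ⟨p, rfl⟩ := Nat.exists_eq_add_of_le hab
  obtain ⟨r, rfl⟩ := Nat.exists_eq_add_of_le hac
  have hd : d = a + (p + r) := by omega
  subst hd
  rw [pow_add, pow_add, pow_add, pow_add]
  have h1 : 0 ≤ 1 - q ^ p := by nlinarith [pow_le_one₀ hq hq1 (n := p)]
  have h2 : 0 ≤ 1 - q ^ r := by nlinarith [pow_le_one₀ hq hq1 (n := r)]
  nlinarith [mul_nonneg (mul_nonneg (pow_nonneg hq a) h1) h2]

lemma foursq (a b c d : ℝ) (ha : 0 < a) (hab : a ≤ b) (hbc : b ≤ c) (hcd : c ≤ d)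
    (h : a + d = b + c) : 1 / b ^ 2 + 1 / c ^ 2 ≤ 1 / a ^ 2 + 1 / d ^ 2 := by
  have hb : 0 < b := lt_of_lt_of_le ha hab
  have hc : 0 < c := lt_of_lt_of_le hb hbc
  have hd : 0 < d := lt_of_lt_of_le hc hcd
  rw [div_add_div _ _ (by positivity) (by positivity),
      div_add_div _ _ (by positivity) (by positivity),
      div_le_div_iff₀ (by positivity) (by positivity)]
  have hss : (0:ℝ) ≤ d - b := by linarith
  have h5 : a * c ^ 2 ≤ b * d ^ 2 :=
    mul_le_mul hab (pow_le_pow_left₀ hc.le hcd 2) (by positivity) hb.le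
  have h6 : a ^ 2 * c ≤ b ^ 2 * d :=
    mul_le_mul (pow_le_pow_left₀ ha.le hab 2) hcd hc.le (by positivity)
  have t1 : 0 ≤ (d - b) * ((a * b) * (b * d ^ 2 - a * c ^ 2)) :=
    mul_nonneg hss (mul_nonneg (by positivity) (by linarith))
  have t2 : 0 ≤ (d - b) * ((c * d) * (b ^ 2 * d - a ^ 2 * c)) :=
    mul_nonneg hss (mul_nonneg (by positivity) (by linarith))
  have hd' : d = b + c - a := by linarith
  subst hd'
  nlinarith [t1, t2]

lemma chebpair (GA GB GC GD HA HB HC HD : ℝ)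
    (hGC0 : 0 ≤ GC) (hGD0 : 0 ≤ GD) (hHD0 : 0 ≤ HD)
    (hGBC : GC ≤ GB) (hGCD : GD ≤ GC) (hG : GB + GC ≤ GA + GD)
    (hHAB : HB ≤ HA) (hHCD : HD ≤ HC) (hHAD : HD ≤ HA) (hH : HB + HC ≤ HA + HD) :
    GB * HB + GC * HC ≤ GA * HA + GD * HD := by
  have hGAB : GB ≤ GA := by linarith
  nlinarith [mul_nonneg (sub_nonneg.2 hGBC) (sub_nonneg.2 hHAB),
    mul_nonneg hGC0 (by linarith : (0:ℝ) ≤ HA + HD - HB - HC),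
    mul_nonneg (sub_nonneg.2 hHAD) (sub_nonneg.2 hGAB),
    mul_nonneg hHD0 (by linarith : (0:ℝ) ≤ GA + GD - GB - GC)]

private lemma pairlemma (q : ℝ) (hq : 0 < q) (hq1 : q ≤ 1) (a b c d : ℕ)
    (ha : 1 ≤ a) (hab : a ≤ b) (hbc : b ≤ c) (hcd : c ≤ d) (h : a + d = b + c) :
    q ^ b / (b : ℝ) ^ 2 + q ^ c / (c : ℝ) ^ 2 ≤ q ^ a / (a : ℝ) ^ 2 + q ^ d / (d : ℝ) ^ 2 := by
  have haR : (0:ℝ) < (a:ℝ) := by exact_mod_cast Nat.lt_of_lt_of_le Nat.zero_lt_one ha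
  have habR : (a:ℝ) ≤ b := by exact_mod_cast hab
  have hbcR : (b:ℝ) ≤ c := by exact_mod_cast hbc
  have hcdR : (c:ℝ) ≤ d := by exact_mod_cast hcd
  have hR : (a:ℝ) + d = b + c := by exact_mod_cast h
  have hbR : (0:ℝ) < (b:ℝ) := lt_of_lt_of_le haR habR
  have hcR : (0:ℝ) < (c:ℝ) := lt_of_lt_of_le hbR hbcR
  have hdR : (0:ℝ) < (d:ℝ) := lt_of_lt_of_le hcR hcdR
  have key := chebpair (q^a) (q^b) (q^c) (q^d)
      (1/(a:ℝ)^2) (1/(b:ℝ)^2) (1/(c:ℝ)^2) (1/(d:ℝ)^2)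
      (by positivity) (by positivity) (by positivity)
      (pow_le_pow_of_le_one hq.le hq1 hbc)
      (pow_le_pow_of_le_one hq.le hq1 hcd)
      (fourexp q hq.le hq1 a b c d hab (le_trans hab hbc) h)
      (by rw [div_le_div_iff₀ (by positivity) (by positivity)]; nlinarith)
      (by rw [div_le_div_iff₀ (by positivity) (by positivity)]; nlinarith)
      (by rw [div_le_div_iff₀ (by positivity) (by positivity)]; nlinarith)
      (foursq (a:ℝ) b c d haR habR hbcR hcdR hR)
  calc q ^ b / (b : ℝ) ^ 2 + q ^ c / (c : ℝ) ^ 2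
      = q^b * (1/(b:ℝ)^2) + q^c * (1/(c:ℝ)^2) := by ring
    _ ≤ q^a * (1/(a:ℝ)^2) + q^d * (1/(d:ℝ)^2) := key
    _ = q ^ a / (a : ℝ) ^ 2 + q ^ d / (d : ℝ) ^ 2 := by ring

theorem stmt_10 (q : ℝ) (hq : 0 < q) (hq1 : q < 1) (n : ℕ) (hn : 1 ≤ n)
    (j : ℕ) (hj : j ≤ n - 1) :
    ∑' m : ℕ, (q ^ ((2 * (m + 1) + 1) * n - j) / (((2 * (m + 1) + 1) * n - j : ℕ) : ℝ) ^ 2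
        + q ^ ((2 * (m + 1) + 1) * n + j) / (((2 * (m + 1) + 1) * n + j : ℕ) : ℝ) ^ 2)
      ≤ q ^ (2 * n) / (4 * n ^ 2 * (1 - q ^ (2 * n))) := by
  have hj' : j < n := by omega
  set x : ℝ := q ^ (2 * n) with hxdef
  have hx0 : 0 < x := by positivity
  have hx1 : x < 1 := pow_lt_one₀ hq.le hq1 (by omega)
  have h1x : (0:ℝ) < 1 - x := by linarith
  have hnR : (1:ℝ) ≤ (n:ℝ) := by exact_mod_cast hn
  have hnR0 : (0:ℝ) < (n:ℝ) := by linarith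
  have hn2 : (1:ℝ) ≤ (n:ℝ) ^ 2 := by nlinarith
  have hval : ∀ l : ℕ, q ^ (2 * (l+1) * n) / (((2 * (l+1) * n : ℕ)) : ℝ) ^ 2
      = x ^ (l+1) / (4 * ((l:ℝ)+1) ^ 2 * (n:ℝ) ^ 2) := by
    intro l
    have h1 : 2 * (l+1) * n = (2 * n) * (l+1) := by ring
    rw [h1, pow_mul, ← hxdef]
    congr 1
    push_cast
    ring
  set u1 : ℕ → ℝ := fun m => x ^ (m+1) / (4 * ((m:ℝ)+1) ^ 2 * (n:ℝ) ^ 2) with hu1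
  set u2 : ℕ → ℝ := fun m => x ^ (m+2) / (4 * ((m:ℝ)+2) ^ 2 * (n:ℝ) ^ 2) with hu2
  have hu1sum : Summable u1 := by
    apply Summable.of_nonneg_of_le (fun m => by positivity)
      (fun m => ?_) ((summable_geometric_of_lt_one hx0.le hx1).mul_left x)
    · rw [hu1]
      have hm1 : (1:ℝ) ≤ ((m:ℝ)+1) ^ 2 := by nlinarith [Nat.cast_nonneg (α := ℝ) m]
      calc x ^ (m+1) / (4 * ((m:ℝ)+1) ^ 2 * (n:ℝ) ^ 2) ≤ x ^ (m+1) := by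
            apply div_le_self (by positivity)
            nlinarith
        _ = x * x ^ m := by ring
  have hu2sum : Summable u2 := by
    apply Summable.of_nonneg_of_le (fun m => by positivity)
      (fun m => ?_) ((summable_geometric_of_lt_one hx0.le hx1).mul_left (x^2))
    · rw [hu2]
      have hm1 : (1:ℝ) ≤ ((m:ℝ)+2) ^ 2 := by nlinarith [Nat.cast_nonneg (α := ℝ) m]
      calc x ^ (m+2) / (4 * ((m:ℝ)+2) ^ 2 * (n:ℝ) ^ 2) ≤ x ^ (m+2) := by
            apply div_le_self (by positivity)
            nlinarith
        _ = x^2 * x ^ m := by ring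
  have husum : Summable (fun m => u1 m + u2 m) := hu1sum.add hu2sum
  have hbound : ∀ m : ℕ,
      q ^ ((2 * (m + 1) + 1) * n - j) / (((2 * (m + 1) + 1) * n - j : ℕ) : ℝ) ^ 2
        + q ^ ((2 * (m + 1) + 1) * n + j) / (((2 * (m + 1) + 1) * n + j : ℕ) : ℝ) ^ 2
      ≤ u1 m + u2 m := by
    intro m
    have step : q ^ ((2 * (m + 1) + 1) * n - j) / (((2 * (m + 1) + 1) * n - j : ℕ) : ℝ) ^ 2
        + q ^ ((2 * (m + 1) + 1) * n + j) / (((2 * (m + 1) + 1) * n + j : ℕ) : ℝ) ^ 2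
        ≤ q ^ (2 * (m+1) * n) / (((2 * (m+1) * n : ℕ)) : ℝ) ^ 2
          + q ^ (2 * (m+2) * n) / (((2 * (m+2) * n : ℕ)) : ℝ) ^ 2 := by
      have hP : n ≤ (m+1) * n := Nat.le_mul_of_pos_left n (by omega)
      have e1 : (2 * (m + 1) + 1) * n - j = 2 * ((m+1)*n) + n - j := by
        congr 1; ring
      have e2 : (2 * (m + 1) + 1) * n + j = 2 * ((m+1)*n) + n + j := by ring
      have e3 : 2 * (m+1) * n = 2 * ((m+1)*n) := by ring
      have e4 : 2 * (m+2) * n = 2 * ((m+1)*n) + 2 * n := by ring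
      rw [e1, e2, e3, e4]
      apply pairlemma q hq hq1.le _ _ _ _ (by omega) (by omega) (by omega) (by omega) (by omega)
    refine le_trans step ?_
    rw [hval m, hval (m+1), hu1, hu2]
    apply le_of_eq
    push_cast
    ring_nf
  have htsum : Summable (fun m : ℕ =>
      q ^ ((2 * (m + 1) + 1) * n - j) / (((2 * (m + 1) + 1) * n - j : ℕ) : ℝ) ^ 2
        + q ^ ((2 * (m + 1) + 1) * n + j) / (((2 * (m + 1) + 1) * n + j : ℕ) : ℝ) ^ 2) :=
    Summable.of_nonneg_of_le (fun m => by positivity) hbound husum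
  have hgeo : Summable (fun m : ℕ => x ^ m * (x^2 / (16 * (n:ℝ)^2))) :=
    (summable_geometric_of_lt_one hx0.le hx1).mul_right _
  calc ∑' m : ℕ, (q ^ ((2 * (m + 1) + 1) * n - j) / (((2 * (m + 1) + 1) * n - j : ℕ) : ℝ) ^ 2
        + q ^ ((2 * (m + 1) + 1) * n + j) / (((2 * (m + 1) + 1) * n + j : ℕ) : ℝ) ^ 2)
      ≤ ∑' m, (u1 m + u2 m) := Summable.tsum_le_tsum hbound htsum husum
    _ = ∑' m, u1 m + ∑' m, u2 m := Summable.tsum_add hu1sum hu2sum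
    _ = (u1 0 + ∑' m, u1 (m+1)) + ∑' m, u2 m := by rw [Summable.tsum_eq_zero_add hu1sum]
    _ = u1 0 + 2 * ∑' m, u2 m := by
        have heq : (fun m : ℕ => u1 (m+1)) = u2 := by
          funext m; rw [hu1, hu2]; push_cast; ring_nf
        rw [heq]; ring
    _ ≤ u1 0 + 2 * ∑' m : ℕ, x ^ m * (x^2 / (16 * (n:ℝ)^2)) := by
        have hle : ∀ m : ℕ, u2 m ≤ x ^ m * (x^2 / (16 * (n:ℝ)^2)) := by
          intro m
          rw [hu2]
          have h4 : (4:ℝ) ≤ ((m:ℝ)+2)^2 := by nlinarith [Nat.cast_nonneg (α := ℝ) m]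
          calc x ^ (m+2) / (4 * ((m:ℝ)+2) ^ 2 * (n:ℝ) ^ 2)
              ≤ x ^ (m+2) / (16 * (n:ℝ)^2) := by
                apply div_le_div_of_nonneg_left (by positivity) (by positivity)
                nlinarith [sq_nonneg (n:ℝ)]
            _ = x ^ m * (x^2 / (16 * (n:ℝ)^2)) := by ring
        have := Summable.tsum_le_tsum hle hu2sum hgeo
        linarith
    _ ≤ x / (4 * (n:ℝ) ^ 2 * (1 - x)) := by
        rw [tsum_mul_right, tsum_geometric_of_lt_one hx0.le hx1]
        have hu10 : u1 0 = x / (4 * (n:ℝ)^2) := by rw [hu1]; norm_num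
        rw [hu10]
        have key : x / (4*(n:ℝ)^2*(1-x)) - (x/(4*(n:ℝ)^2) + 2*((1-x)⁻¹ * (x^2/(16*(n:ℝ)^2))))
            = x^2 / (8*(n:ℝ)^2*(1-x)) := by
          field_simp
          ring
        have hpos : (0:ℝ) ≤ x^2 / (8*(n:ℝ)^2*(1-x)) := by positivity
        linarith
    _ = q ^ (2 * n) / (4 * (n:ℝ) ^ 2 * (1 - q ^ (2 * n))) := by rw [← hxdef]
end

section
/- Fix n ∈ ℕ, n ≥ 2. The function f(j) = j(2n−j)/(7(n−j)²) − j²π²/(8n²) is strictly increasing on the real interval [0, n−1]. -/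
open Real

theorem stmt_13 (n : ℕ) (hn : 2 ≤ n) :
    StrictMonoOn
      (fun j : ℝ => j * (2 * n - j) / (7 * ((n : ℝ) - j) ^ 2) - j ^ 2 * π ^ 2 / (8 * n ^ 2))
      (Set.Icc (0 : ℝ) ((n : ℝ) - 1)) := by
  have hn2 : (2 : ℝ) ≤ n := by exact_mod_cast hn
  have hnpos : (0 : ℝ) < n := by linarith
  apply strictMonoOn_of_deriv_pos (convex_Icc _ _)
  · apply ContinuousOn.sub
    · apply ContinuousOn.div
      · fun_prop
      · fun_prop
      · intro x hx
        have h1 : (1 : ℝ) ≤ (n : ℝ) - x := by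
          have := hx.2; linarith
        positivity
    · apply ContinuousOn.div
      · fun_prop
      · fun_prop
      · intro x _
        positivity
  · intro x hx
    rw [interior_Icc] at hx
    have hx0 : 0 < x := hx.1
    have hx1 : x < (n : ℝ) - 1 := hx.2
    have hnx : (1 : ℝ) < (n : ℝ) - x := by linarith
    have hne : (n : ℝ) - x ≠ 0 := by linarith
    have hD : HasDerivAt
        (fun j : ℝ => j * (2 * n - j) / (7 * ((n : ℝ) - j) ^ 2) - j ^ 2 * π ^ 2 / (8 * n ^ 2))
        (2 * (n : ℝ) ^ 2 / (7 * ((n : ℝ) - x) ^ 3) - x * π ^ 2 / (4 * n ^ 2)) x := by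
      have h1 : HasDerivAt (fun j : ℝ => j * (2 * n - j)) (2 * (n : ℝ) - 2 * x) x := by
        have := (hasDerivAt_id x).mul ((hasDerivAt_const x (2 * (n : ℝ))).sub (hasDerivAt_id x))
        exact this.congr_deriv (by simp [id]; ring)
      have h2 : HasDerivAt (fun j : ℝ => 7 * ((n : ℝ) - j) ^ 2) (-14 * ((n : ℝ) - x)) x := by
        have := (((hasDerivAt_const x ((n : ℝ))).sub (hasDerivAt_id x)).pow 2).const_mul 7
        exact this.congr_deriv (by simp [id]; ring)
      have hden : 7 * ((n : ℝ) - x) ^ 2 ≠ 0 := by positivity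
      have h3 := h1.div h2 hden
      have h4 : HasDerivAt (fun j : ℝ => j ^ 2 * π ^ 2 / (8 * (n : ℝ) ^ 2))
          (x * π ^ 2 / (4 * n ^ 2)) x := by
        have := ((hasDerivAt_pow 2 x).mul_const (π ^ 2)).div_const (8 * (n : ℝ) ^ 2)
        refine this.congr_deriv ?_
        field_simp
        ring
      refine (h3.sub h4).congr_deriv ?_
      field_simp
      ring
    rw [hD.deriv]
    rw [sub_pos, div_lt_div_iff₀ (by positivity) (by positivity)]
    -- goal: x * π ^ 2 * (7 * (n - x) ^ 3) < 2 * n ^ 2 * (4 * n ^ 2)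
    set t : ℝ := (n : ℝ) - x with ht
    have hts : x + t = (n : ℝ) := by rw [ht]; ring
    have htpos : 0 < t := by linarith
    have hamgm : 256 * (x * t ^ 3) ≤ 27 * (x + t) ^ 4 := by
      nlinarith [sq_nonneg (3 * x - t), sq_nonneg (x + t), sq_nonneg x, sq_nonneg t,
        mul_pos hx0 htpos, sq_nonneg (3 * x + t), mul_nonneg hx0.le htpos.le,
        mul_nonneg (mul_nonneg hx0.le htpos.le) htpos.le]
    have hpi : π ^ 2 < 9.9225 := by
      nlinarith [Real.pi_lt_d2, Real.pi_pos]
    have hxt : 0 < x * t ^ 3 := by positivity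
    have hn4 : (0 : ℝ) < (n : ℝ) ^ 4 := by positivity
    rw [← hts]
    nlinarith [mul_lt_mul_of_pos_right hpi hxt, hamgm, hn4, sq_nonneg ((x + t) ^ 2)]
end

section
/- For q ∈ (0,1) and n ∈ ℕ with n ≥ 2 satisfying q^n/(1−q^{2n}) ≤ (2/(15n²))q^{√n}, one has for all integers 0 ≤ j ≤ n−1: q^{n−j}/(n−j)² + q^{n+j}/(n+j)² − (3/4)·q^{2n}/(1−q^{2n}) ≥ (9/10)·q^{n−j}/(n−j)². -/
open Real

theorem stmt_16 (q : ℝ) (hq : 0 < q) (hq1 : q < 1) (n : ℕ) (hn : 2 ≤ n)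
    (hsmall : q ^ n / (1 - q ^ (2 * n)) ≤ 2 / (15 * n ^ 2) * q ^ (Real.sqrt n))
    (j : ℕ) (hj : j ≤ n - 1) :
    q ^ (n - j) / (((n : ℝ) - j) ^ 2) + q ^ (n + j) / (((n : ℝ) + j) ^ 2)
        - 3 / 4 * (q ^ (2 * n) / (1 - q ^ (2 * n)))
      ≥ 9 / 10 * (q ^ (n - j) / (((n : ℝ) - j) ^ 2)) := by
  have hjn : j < n := by omega
  have hjr : (j : ℝ) < n := by exact_mod_cast hjn
  have hd : (0:ℝ) < (n:ℝ) - j := by linarith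
  have hmid : 0 ≤ q ^ (n + j) / (((n : ℝ) + j) ^ 2) := by positivity
  have hr1 : q ^ (Real.sqrt n) ≤ 1 :=
    Real.rpow_le_one hq.le hq1.le (Real.sqrt_nonneg _)
  have hr0 : 0 ≤ q ^ (Real.sqrt n) := Real.rpow_nonneg hq.le _
  have hpow : q ^ n * q ^ (Real.sqrt n) ≤ q ^ (n - j) := by
    calc q ^ n * q ^ (Real.sqrt n) ≤ q ^ n * 1 := by
          exact mul_le_mul_of_nonneg_left hr1 (by positivity)
      _ = q ^ n := mul_one _
      _ ≤ q ^ (n - j) := pow_le_pow_of_le_one hq.le hq1.le (Nat.sub_le _ _)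
  have hden : ((n:ℝ) - j) ^ 2 ≤ (n:ℝ) ^ 2 := by nlinarith
  have hfrac : q ^ n * q ^ (Real.sqrt n) / (n:ℝ) ^ 2
      ≤ q ^ (n - j) / (((n : ℝ) - j) ^ 2) :=
    div_le_div₀ (by positivity) hpow (by positivity) hden
  have hsplit : q ^ (2 * n) / (1 - q ^ (2 * n))
      = q ^ n * (q ^ n / (1 - q ^ (2 * n))) := by
    rw [two_mul, pow_add]; ring
  have key : 3 / 4 * (q ^ (2 * n) / (1 - q ^ (2 * n)))
      ≤ 1 / 10 * (q ^ (n - j) / (((n : ℝ) - j) ^ 2)) := by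
    rw [hsplit]
    have h1 : q ^ n * (q ^ n / (1 - q ^ (2 * n)))
        ≤ q ^ n * (2 / (15 * n ^ 2) * q ^ (Real.sqrt n)) :=
      mul_le_mul_of_nonneg_left hsmall (by positivity)
    have hn0 : (0:ℝ) < (n:ℝ) ^ 2 := by positivity
    have h2 : q ^ n * (2 / (15 * (n:ℝ) ^ 2) * q ^ (Real.sqrt n))
        = 2 / 15 * (q ^ n * q ^ (Real.sqrt n) / (n:ℝ) ^ 2) := by
      field_simp
    nlinarith [hfrac]
  linarith [key, hmid]
end
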